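/- Let P_1(X) = Σ_{i=0}^{M−1} a_i X^{M−1−i} and P_2(X) = Σ_{i=0}^{N−1} b_i X^{N−1−i} be nonconstant polynomials over ℤ with |a_i| < H^{i+σ} and |b_i| < H^{i+θ} for all i, where H ≥ 2 and σ, θ ≥ 0. Then |Res(P_1, P_2)| ≤ C(M, N) · H^{(M−1+σ)(N−1+θ) − θσ} for some constant C(M, N) depending only on M and N. -/

import Mathlib

open Polynomial Matrix

/-- The Sylvester matrix of two polynomials `f`, `g` over a commutative ring. -/
def sylvesterMatrix {R : Type*} [CommRing R] (f g : Polynomial R) :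
    Matrix (Fin (f.natDegree + g.natDegree)) (Fin (f.natDegree + g.natDegree)) R :=
  Matrix.of fun i j =>
    if (i : ℕ) < g.natDegree then
      (if (i : ℕ) ≤ (j : ℕ) ∧ (j : ℕ) ≤ (i : ℕ) + f.natDegree then
        f.coeff (f.natDegree + i - j) else 0)
    else
      (if (i : ℕ) - g.natDegree ≤ (j : ℕ) ∧ (j : ℕ) ≤ (i : ℕ) - g.natDegree + g.natDegree then
        g.coeff (g.natDegree + ((i : ℕ) - g.natDegree) - j) else 0)

/-- The resultant of two polynomials: the determinant of their Sylvester matrix. -/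
def resultant {R : Type*} [CommRing R] (f g : Polynomial R) : R :=
  (sylvesterMatrix f g).det

/-!
Let `m = deg f`, `n = deg g`. The coefficient bounds read `|f_k| H^k ≤ A := H^(M-1+σ)` and
`|g_k| H^k ≤ B := H^(N-1+θ)`, so the `(i, j)` entry of the Sylvester matrix is at most `x_i H^j`
for explicit row weights `x_i`. Every term of the Leibniz expansion of the determinant is then at
most `∏ x_i ∏ H^j = A^n B^m / H^(mn)`. With `p = M - 1 ≥ m` and `q = N - 1 ≥ n`, the claimed
exponent exceeds the one obtained by `(p - m)(q - n) + θ(p - m) + σ(q - n) ≥ 0`.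
-/

namespace Matrix
open Equiv

theorem det_le_factorial_mul_prod_mul_prod {n R S : Type*} [Fintype n] [DecidableEq n]
    [CommRing R] [Nontrivial R] [CommRing S] [LinearOrder S] [IsStrictOrderedRing S]
    {A : Matrix n n R} {abv : AbsoluteValue R S} {x y : n → S}
    (hxy : ∀ i j, abv (A i j) ≤ x i * y j) :
    abv A.det ≤ (Fintype.card n).factorial * ((∏ i, x i) * ∏ j, y j) :=
  calc
    abv A.det = abv (∑ σ : Perm n, Perm.sign σ • ∏ i, A (σ i) i) := congr_arg abv (det_apply _)
    _ ≤ ∑ σ : Perm n, abv (Perm.sign σ • ∏ i, A (σ i) i) := abv.sum_le _ _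
    _ = ∑ σ : Perm n, ∏ i, abv (A (σ i) i) :=
      Finset.sum_congr rfl fun σ _ => by rw [abv.map_units_int_smul, abv.map_prod]
    _ ≤ ∑ σ : Perm n, ∏ i, x (σ i) * y i :=
      Finset.sum_le_sum fun σ _ =>
        Finset.prod_le_prod (fun i _ => abv.nonneg _) fun i _ => hxy _ _
    _ = (Fintype.card n).factorial * ((∏ i, x i) * ∏ j, y j) := by
      simp [Finset.prod_mul_distrib, Equiv.prod_comp, Fintype.card_perm]

end Matrix

/-- Row `i < deg g` of the Sylvester matrix holds `f.coeff (deg f + i - j)` in column `j`, and row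
`i ≥ deg g` holds `g.coeff (i - j)`. -/
noncomputable def sylvesterRowWeight (f g : ℤ[X]) (H A B : ℝ) (i : ℕ) : ℝ :=
  if i < g.natDegree then A / H ^ (f.natDegree + i) else B / H ^ i

section
variable {f g : ℤ[X]} {H A B : ℝ}

theorem abs_sylvesterMatrix_le (hH : 0 < H)
    (hf : ∀ k ≤ f.natDegree, |(f.coeff k : ℝ)| * H ^ k ≤ A)
    (hg : ∀ k ≤ g.natDegree, |(g.coeff k : ℝ)| * H ^ k ≤ B)
    (i j : Fin (f.natDegree + g.natDegree)) :
    |(sylvesterMatrix f g i j : ℝ)| ≤ sylvesterRowWeight f g H A B i * H ^ (j : ℕ) := by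
  have hA : 0 ≤ A := (mul_nonneg (abs_nonneg _) (pow_nonneg hH.le _)).trans (hf 0 (Nat.zero_le _))
  have hB : 0 ≤ B := (mul_nonneg (abs_nonneg _) (pow_nonneg hH.le _)).trans (hg 0 (Nat.zero_le _))
  have shift : ∀ {c C : ℝ} {k l : ℕ}, c * H ^ k ≤ C → k + j = l → c ≤ C / H ^ l * H ^ (j : ℕ) := by
    rintro c C k l h rfl
    rwa [pow_add, div_mul_eq_mul_div, mul_div_mul_right _ _ (pow_pos hH _).ne',
      le_div_iff₀ (pow_pos hH _)]
  unfold sylvesterMatrix sylvesterRowWeight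
  rw [of_apply]
  split_ifs with hi hband hband
  · exact shift (hf _ (by omega)) (by omega)
  · simp only [Int.cast_zero, abs_zero]; positivity
  · exact shift (hg _ (by omega)) (by omega)
  · simp only [Int.cast_zero, abs_zero]; positivity

theorem prod_sylvesterRowWeight_mul_prod_pow (hH : 0 < H) :
    (∏ i : Fin (f.natDegree + g.natDegree), sylvesterRowWeight f g H A B i) *
        ∏ j : Fin (f.natDegree + g.natDegree), H ^ (j : ℕ) =
      A ^ g.natDegree * B ^ f.natDegree / H ^ (f.natDegree * g.natDegree) := by
  set m := f.natDegree
  set n := g.natDegree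
  have hsum : ∑ i ∈ Finset.range n, (m + i) + ∑ i ∈ Finset.range m, (n + i) =
      m * n + ∑ j ∈ Finset.range (n + m), j := by
    rw [Finset.sum_range_add, Finset.sum_add_distrib]
    simp only [Finset.sum_const, Finset.card_range, smul_eq_mul]
    ring
  have hf : ∏ i ∈ Finset.range n, sylvesterRowWeight f g H A B i =
      ∏ i ∈ Finset.range n, A / H ^ (m + i) :=
    Finset.prod_congr rfl fun i hi => if_pos (Finset.mem_range.mp hi)
  have hg : ∏ i ∈ Finset.range m, sylvesterRowWeight f g H A B (n + i) =
      ∏ i ∈ Finset.range m, B / H ^ (n + i) :=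
    Finset.prod_congr rfl fun i _ => if_neg (by omega)
  rw [Fin.prod_univ_eq_prod_range (sylvesterRowWeight f g H A B),
    Fin.prod_univ_eq_prod_range (H ^ ·), add_comm m n, Finset.prod_range_add, hf, hg,
    Finset.prod_div_distrib, Finset.prod_div_distrib, Finset.prod_const, Finset.prod_const,
    Finset.card_range, Finset.card_range, Finset.prod_pow_eq_pow_sum, Finset.prod_pow_eq_pow_sum,
    Finset.prod_pow_eq_pow_sum, div_mul_div_comm, div_mul_eq_mul_div, ← pow_add, hsum, pow_add,
    mul_div_mul_right _ _ (pow_ne_zero _ hH.ne')]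

theorem abs_resultant_le (hH : 0 < H)
    (hf : ∀ k ≤ f.natDegree, |(f.coeff k : ℝ)| * H ^ k ≤ A)
    (hg : ∀ k ≤ g.natDegree, |(g.coeff k : ℝ)| * H ^ k ≤ B) :
    |((_root_.resultant f g : ℤ) : ℝ)| ≤ (f.natDegree + g.natDegree).factorial *
      (A ^ g.natDegree * B ^ f.natDegree / H ^ (f.natDegree * g.natDegree)) := by
  rw [← prod_sylvesterRowWeight_mul_prod_pow hH]
  have := det_le_factorial_mul_prod_mul_prod (A := sylvesterMatrix f g)
    (abv := AbsoluteValue.abs.comp (Int.castRingHom ℝ).injective_int)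
    (abs_sylvesterMatrix_le hH hf hg)
  rw [Fintype.card_fin] at this
  exact this
end

theorem natDegree_sum_C_mul_X_pow_sub_le {R : Type*} [Semiring R] (M : ℕ) (a : ℕ → R) :
    (∑ i ∈ Finset.range M, C (a i) * X ^ (M - 1 - i)).natDegree ≤ M - 1 :=
  natDegree_sum_le_of_forall_le _ _ fun _ _ =>
    (natDegree_C_mul_X_pow_le _ _).trans (Nat.sub_le _ _)

theorem coeff_sum_C_mul_X_pow_sub {R : Type*} [Semiring R] {M k : ℕ} (a : ℕ → R) (hk : k < M) :
    (∑ i ∈ Finset.range M, C (a i) * X ^ (M - 1 - i)).coeff k = a (M - 1 - k) := by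
  rw [finsetSum_coeff, Finset.sum_eq_single (M - 1 - k)]
  · rw [coeff_C_mul_X_pow, if_pos (by omega)]
  · intro i hi hne
    rw [coeff_C_mul_X_pow, if_neg (by rw [Finset.mem_range] at hi; omega)]
  · exact fun h => absurd (Finset.mem_range.mpr (by omega)) h

theorem abs_coeff_sum_C_mul_X_pow_sub_mul_pow_le {M k : ℕ} {a : ℕ → ℤ} {H σ : ℝ} (hH : 0 < H)
    (ha : ∀ i < M, |(a i : ℝ)| < H ^ ((i : ℝ) + σ)) (hk : k < M) :
    |((∑ i ∈ Finset.range M, C (a i) * X ^ (M - 1 - i)).coeff k : ℝ)| * H ^ k ≤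
      H ^ ((M : ℝ) - 1 + σ) := by
  have hcast : ((M - 1 - k : ℕ) : ℝ) + σ + k = M - 1 + σ := by
    rw [Nat.cast_sub (by omega), Nat.cast_sub (by omega)]; push_cast; ring
  rw [coeff_sum_C_mul_X_pow_sub a hk, ← Real.rpow_natCast, ← hcast, Real.rpow_add hH]
  exact mul_le_mul_of_nonneg_right (ha _ (by omega)).le (by positivity)

theorem resultant_bound_general (M N : ℕ) :
    ∃ K : ℝ, 0 < K ∧ ∀ (H σ θ : ℝ), 2 ≤ H → 0 ≤ σ → 0 ≤ θ →
      ∀ a b : ℕ → ℤ,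
      (∀ i < M, |(a i : ℝ)| < H ^ ((i : ℝ) + σ)) →
      (∀ i < N, |(b i : ℝ)| < H ^ ((i : ℝ) + θ)) →
      ∀ P₁ P₂ : Polynomial ℤ,
        P₁ = ∑ i ∈ Finset.range M, C (a i) * X ^ (M - 1 - i) →
        P₂ = ∑ i ∈ Finset.range N, C (b i) * X ^ (N - 1 - i) →
        0 < P₁.natDegree → 0 < P₂.natDegree →
        |((_root_.resultant P₁ P₂ : ℤ) : ℝ)| ≤
          K * H ^ (((M : ℝ) - 1 + σ) * ((N : ℝ) - 1 + θ) - θ * σ) := by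
  refine ⟨(M + N).factorial, by positivity, ?_⟩
  rintro H σ θ hH hσ hθ a b ha hb P₁ P₂ rfl rfl hm hn
  have hH0 : 0 < H := by linarith
  have hmM := natDegree_sum_C_mul_X_pow_sub_le M a
  have hnN := natDegree_sum_C_mul_X_pow_sub_le N b
  set m := (∑ i ∈ Finset.range M, C (a i) * X ^ (M - 1 - i)).natDegree
  set n := (∑ i ∈ Finset.range N, C (b i) * X ^ (N - 1 - i)).natDegree
  have hm' : (m : ℝ) + 1 ≤ M := by exact_mod_cast (by omega : m + 1 ≤ M)
  have hn' : (n : ℝ) + 1 ≤ N := by exact_mod_cast (by omega : n + 1 ≤ N)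
  have hexp : ((M : ℝ) - 1 + σ) * n + ((N : ℝ) - 1 + θ) * m - (m * n : ℕ) ≤
      ((M : ℝ) - 1 + σ) * ((N : ℝ) - 1 + θ) - θ * σ := by
    push_cast
    nlinarith [mul_nonneg (sub_nonneg.2 hm') (sub_nonneg.2 hn'), mul_nonneg hθ (sub_nonneg.2 hm'),
      mul_nonneg hσ (sub_nonneg.2 hn')]
  refine (abs_resultant_le hH0
    (fun k hk => abs_coeff_sum_C_mul_X_pow_sub_mul_pow_le hH0 ha (by omega))
    (fun k hk => abs_coeff_sum_C_mul_X_pow_sub_mul_pow_le hH0 hb (by omega))).trans ?_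
  rw [← Real.rpow_mul_natCast hH0.le, ← Real.rpow_mul_natCast hH0.le, ← Real.rpow_add hH0,
    ← Real.rpow_natCast H (m * n), ← Real.rpow_sub hH0]
  exact mul_le_mul (by exact_mod_cast Nat.factorial_le (by omega))
    (Real.rpow_le_rpow_of_exponent_le (by linarith) hexp) (by positivity) (by positivity)

/-- Resultant bound of Bourgain–Garaev–Konyagin–Shparlinski: if
`P₁ = Σ_{i<M} a_i X^{M-1-i}`, `P₂ = Σ_{i<N} b_i X^{N-1-i}` are nonconstant with
`|a_i| < H^{i+σ}`, `|b_i| < H^{i+θ}`, then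
`|Res(P₁,P₂)| ≤ C(M,N) · H^{(M-1+σ)(N-1+θ) - θσ}`. -/
theorem resultant_bound (M N : ℕ) (hM : 1 ≤ M) (hN : 1 ≤ N) :
    ∃ K : ℝ, 0 < K ∧ ∀ (H σ θ : ℝ), 2 ≤ H → 0 ≤ σ → 0 ≤ θ →
      ∀ a b : ℕ → ℤ,
      (∀ i < M, |(a i : ℝ)| < H ^ ((i : ℝ) + σ)) →
      (∀ i < N, |(b i : ℝ)| < H ^ ((i : ℝ) + θ)) →
      ∀ P₁ P₂ : Polynomial ℤ,
        P₁ = ∑ i ∈ Finset.range M, C (a i) * X ^ (M - 1 - i) →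
        P₂ = ∑ i ∈ Finset.range N, C (b i) * X ^ (N - 1 - i) →
        0 < P₁.natDegree → 0 < P₂.natDegree →
        |((_root_.resultant P₁ P₂ : ℤ) : ℝ)| ≤
          K * H ^ (((M : ℝ) - 1 + σ) * ((N : ℝ) - 1 + θ) - θ * σ) :=
  resultant_bound_general M N
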